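/- Let p, q ≥ 1 be integers and let ζ ∈ ℂ satisfy ζ^{p+q−1} = 1. Then D_{p,q}(ζ) − D_{p−1,q}(ζ) − D_{p,q−1}(ζ) = D(p−1, q−1) · ζ^{−1}, where D(p−1,q−1) is the number of (p−1,q−1) Delannoy paths. -/
import Mathlib


/-- A step of a lattice path: east `(1,0)`, north `(0,1)`, or diagonal `(1,1)`. -/
inductive DStep : Type
  | E | N | D
deriving DecidableEq

/-- The displacement vector of a step. -/
def stepVec : DStep → ℕ × ℕ
  | .E => (1, 0)
  | .N => (0, 1)
  | .D => (1, 1)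

/-- A `(p,q)` Delannoy path: a sequence of steps `E`, `N`, `D` whose total
displacement from `(0,0)` is `(p,q)`. -/
def IsDelannoy (p q : ℕ) (l : List DStep) : Prop :=
  (l.map stepVec).sum = (p, q)

/-- `D(p,q)`, the number of `(p,q)` Delannoy paths. -/
noncomputable def delannoyNum (p q : ℕ) : ℕ :=
  Nat.card {l : List DStep // IsDelannoy p q l}

/-- The weight of the part of a Delannoy path starting at the given lattice
point: a diagonal step starting at `(a,b)` contributes a factor `a+b+1`,
other steps contribute `1`. -/
def weightFrom : ℕ × ℕ → List DStep → ℕ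
  | _, [] => 1
  | ab, s :: t => (if s = DStep.D then ab.1 + ab.2 + 1 else 1) * weightFrom (ab + stepVec s) t

/-- The weight `ω(L)` of a Delannoy path `L` (starting at the origin): the
product over all diagonal steps going from a point `(a,b)` to `(a+1,b+1)`
of the numbers `a+b+1`. -/
def weight (l : List DStep) : ℕ := weightFrom (0, 0) l

/-- The weight generating polynomial `D_{p,q}(t) = ∑_{L ∈ 𝒟(p,q)} t^{ω(L)-1}`. -/
noncomputable def Dpoly (p q : ℕ) : Polynomial ℕ :=
  ∑ᶠ L : {l : List DStep // IsDelannoy p q l}, (Polynomial.X : Polynomial ℕ) ^ (weight L.1 - 1)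

instance : Fintype DStep where
  elems := {DStep.E, DStep.N, DStep.D}
  complete := by intro x; cases x <;> decide

lemma weightFrom_append (l : List DStep) (s : DStep) (ab : ℕ × ℕ) :
    weightFrom ab (l ++ [s]) =
      weightFrom ab l *
        (if s = DStep.D then (ab + (l.map stepVec).sum).1 + (ab + (l.map stepVec).sum).2 + 1
         else 1) := by
  induction l generalizing ab with
  | nil => simp [weightFrom, mul_comm]
  | cons a t ih => simp [weightFrom, ih, add_assoc, mul_assoc]

lemma weightFrom_pos (l : List DStep) (ab : ℕ × ℕ) : 0 < weightFrom ab l := by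
  induction l generalizing ab with
  | nil => exact one_pos
  | cons a t ih => exact Nat.mul_pos (by split <;> omega) (ih _)

lemma length_le (l : List DStep) : l.length ≤ ((l.map stepVec).sum).1 + ((l.map stepVec).sum).2 := by
  induction l with
  | nil => simp
  | cons a t ih =>
    simp only [List.map_cons, List.sum_cons, List.length_cons, Prod.fst_add, Prod.snd_add]
    cases a <;> simp [stepVec] <;> omega

lemma isDelannoy_finite (p q : ℕ) : {l : List DStep | IsDelannoy p q l}.Finite := by
  apply (List.finite_length_le DStep (p + q)).subset
  intro l hl
  have := length_le l
  rw [hl] at this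
  exact this

theorem stmt16 (p q : ℕ) (hp : 1 ≤ p) (hq : 1 ≤ q) (ζ : ℂ) (hζ : ζ ^ (p + q - 1) = 1) :
    Polynomial.aeval ζ (Dpoly p q) - Polynomial.aeval ζ (Dpoly (p - 1) q) -
        Polynomial.aeval ζ (Dpoly p (q - 1)) =
      (delannoyNum (p - 1) (q - 1) : ℂ) * ζ⁻¹ := by
  have haev : ∀ a b : ℕ, Polynomial.aeval ζ (Dpoly a b) =
      ∑ᶠ l ∈ {l : List DStep | IsDelannoy a b l}, ζ ^ (weight l - 1) := by
    intro a b
    haveI : Finite {l : List DStep // IsDelannoy a b l} := (isDelannoy_finite a b).to_subtype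
    haveI : Fintype {l : List DStep // IsDelannoy a b l} := Fintype.ofFinite _
    rw [Dpoly, finsum_eq_sum_of_fintype, map_sum]
    simp only [map_pow, Polynomial.aeval_X]
    rw [← finsum_eq_sum_of_fintype]
    exact finsum_set_coe_eq_finsum_mem (f := fun l => ζ ^ (weight l - 1))
      {l : List DStep | IsDelannoy a b l}
  -- set decomposition
  have hdec : {l : List DStep | IsDelannoy p q l} =
      ((· ++ [DStep.E]) '' {l | IsDelannoy (p - 1) q l} ∪
        (· ++ [DStep.N]) '' {l | IsDelannoy p (q - 1) l}) ∪
        (· ++ [DStep.D]) '' {l | IsDelannoy (p - 1) (q - 1) l} := by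
    ext l
    constructor
    · intro h
      rcases l.eq_nil_or_concat' with rfl | ⟨L, b, rfl⟩
      · simp only [IsDelannoy, List.map_nil, List.sum_nil, Set.mem_setOf_eq] at h
        have : (0 : ℕ × ℕ).1 = p := by rw [h]
        simp at this; omega
      · simp only [IsDelannoy, Set.mem_setOf_eq, List.map_append, List.sum_append,
          List.map_cons, List.map_nil, List.sum_cons, List.sum_nil, add_zero] at h
        have h1 : ((L.map stepVec).sum).1 + (stepVec b).1 = p := by
          rw [← Prod.fst_add, h]
        have h2 : ((L.map stepVec).sum).2 + (stepVec b).2 = q := by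
          rw [← Prod.snd_add, h]
        cases b with
        | E =>
          refine Or.inl (Or.inl ⟨L, ?_, rfl⟩)
          simp only [stepVec] at h1 h2
          exact Prod.ext (by omega) (by omega)
        | N =>
          refine Or.inl (Or.inr ⟨L, ?_, rfl⟩)
          simp only [stepVec] at h1 h2
          exact Prod.ext (by omega) (by omega)
        | D =>
          refine Or.inr ⟨L, ?_, rfl⟩
          simp only [stepVec] at h1 h2
          exact Prod.ext (by omega) (by omega)
    · intro h
      rcases h with (⟨L, hL, rfl⟩ | ⟨L, hL, rfl⟩) | ⟨L, hL, rfl⟩ <;>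
      · simp only [IsDelannoy, Set.mem_setOf_eq, List.map_append, List.sum_append,
          List.map_cons, List.map_nil, List.sum_cons, List.sum_nil, add_zero] at hL ⊢
        rw [hL]
        refine Prod.ext ?_ ?_ <;> simp [stepVec] <;> omega
  -- disjointness
  have hdisj : ∀ s t : DStep, s ≠ t → ∀ (A B : Set (List DStep)),
      Disjoint ((· ++ [s]) '' A) ((· ++ [t]) '' B) := by
    intro s t hst A B
    rw [Set.disjoint_left]
    rintro a ⟨x, _, rfl⟩ ⟨y, _, hy⟩
    have h2 := congrArg List.getLast? hy
    simp only [List.getLast?_concat, Option.some.injEq] at h2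
    exact hst h2.symm
  have hinj : ∀ (s : DStep) (A : Set (List DStep)), A.InjOn (· ++ [s]) :=
    fun s A x _ y _ h => List.append_cancel_right h
  have hfE := (isDelannoy_finite (p - 1) q).image (· ++ [DStep.E])
  have hfN := (isDelannoy_finite p (q - 1)).image (· ++ [DStep.N])
  have hfD := (isDelannoy_finite (p - 1) (q - 1)).image (· ++ [DStep.D])
  rw [haev, haev, haev, hdec,
    finsum_mem_union (Set.disjoint_union_left.2
      ⟨hdisj _ _ (by simp) _ _, hdisj _ _ (by simp) _ _⟩) (hfE.union hfN) hfD,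
    finsum_mem_union (hdisj _ _ (by simp) _ _) hfE hfN,
    finsum_mem_image (hinj _ _), finsum_mem_image (hinj _ _), finsum_mem_image (hinj _ _)]
  have hwE : ∀ l : List DStep, weight (l ++ [DStep.E]) = weight l := by
    intro l
    rw [weight, weightFrom_append]
    exact mul_one _
  have hwN : ∀ l : List DStep, weight (l ++ [DStep.N]) = weight l := by
    intro l
    rw [weight, weightFrom_append]
    exact mul_one _
  simp only [hwE, hwN]
  have hz0 : ζ ≠ 0 := by
    intro h
    rw [h, zero_pow (by omega)] at hζ
    exact zero_ne_one hζ
  have hDterm : ∑ᶠ l ∈ {l : List DStep | IsDelannoy (p - 1) (q - 1) l},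
      ζ ^ (weight (l ++ [DStep.D]) - 1) =
      ∑ᶠ l ∈ {l : List DStep | IsDelannoy (p - 1) (q - 1) l}, ζ⁻¹ := by
    apply finsum_mem_congr rfl
    intro l hl
    have hw : weight (l ++ [DStep.D]) = weight l * (p + q - 1) := by
      rw [weight, weightFrom_append, hl]
      simp only [if_pos rfl, Prod.fst_add, Prod.snd_add]
      show weightFrom (0,0) l * (0 + (p-1) + (0 + (q-1)) + 1) = _
      congr 1
      omega
    rw [hw]
    have h1 : 0 < weight l * (p + q - 1) := Nat.mul_pos (weightFrom_pos l _) (by omega)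
    rw [inv_eq_one_div, eq_div_iff hz0, ← pow_succ]
    have : weight l * (p + q - 1) - 1 + 1 = weight l * (p + q - 1) := by omega
    rw [this, mul_comm, pow_mul, hζ, one_pow]
  rw [hDterm, finsum_mem_eq_finite_toFinset_sum _ (isDelannoy_finite (p-1) (q-1)),
    Finset.sum_const, nsmul_eq_mul]
  have hcard : ((isDelannoy_finite (p-1) (q-1)).toFinset.card : ℂ) =
      (delannoyNum (p-1) (q-1) : ℂ) := by
    norm_cast
    exact (Nat.card_eq_card_finite_toFinset (isDelannoy_finite (p-1) (q-1))).symm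
  rw [hcard]
  ring
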